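/- arXiv:1708.00230 — 5 statements merged into one kernel-verified Lean document; each statement's English description precedes it below -/
import Mathlib

section
/- Let α ∈ ℕ and n ≥ 1. Define T_n^α(x) = -((α+2)_{n-1}/n!)·x·L_{n-1}^{α+2}(x) and the second-order Laguerre operator L_{2}^α y = x y'' + (α+1−x) y'. Then (α+2)!·(L_2^α + n) T_n^α(x) = -(n+1)_α (α+1)(α+2) L_{n-1}^{α+2}(x). -/
open Real Finset

noncomputable def laguerre (n : ℕ) (γ : ℝ) : ℝ → ℝ := fun x =>
  ∑ k ∈ Finset.range (n + 1),
    (-1 : ℝ) ^ k * (ascPochhammer ℝ (n - k)).eval (γ + (k : ℝ) + 1)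
      / ((n - k).factorial * k.factorial) * x ^ k

noncomputable def lagOp (γ : ℝ) (y : ℝ → ℝ) : ℝ → ℝ := fun x =>
  x * deriv (deriv y) x + (γ + 1 - x) * deriv y x

noncomputable def Tpoly (n : ℕ) (α : ℕ) : ℝ → ℝ := fun x =>
  -((ascPochhammer ℝ (n - 1)).eval ((α : ℝ) + 2) / n.factorial) * x * laguerre (n - 1) ((α : ℝ) + 2) x

/-! With `L = L_{n-1}^{α+2}`, the Laguerre equation `x L'' + (α + 3 - x) L' + (n - 1) L = 0`
turns `(𝓛₂^α + n)(x L)` into `(α + 1) L`; this is a polynomial identity, and the Laguerre equation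
itself is checked coefficientwise from the recurrence of the coefficients. The constants then match
because `(α + 1)! (α + 2)_{n-1} = (α + n)! = n! (n + 1)_α`. -/

open Polynomial

noncomputable def laguerreCoeff (m : ℕ) (γ : ℝ) (k : ℕ) : ℝ :=
  (-1 : ℝ) ^ k * (ascPochhammer ℝ (m - k)).eval (γ + (k : ℝ) + 1)
    / ((m - k).factorial * k.factorial)

noncomputable def laguerrePoly (m : ℕ) (γ : ℝ) : ℝ[X] :=
  ∑ k ∈ range (m + 1), C (laguerreCoeff m γ k) * X ^ k

noncomputable def laguerreOpPoly (γ : ℝ) (p : ℝ[X]) : ℝ[X] :=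
  X * derivative (derivative p) + (C (γ + 1) - X) * derivative p

lemma laguerre_eq_eval (m : ℕ) (γ x : ℝ) : laguerre m γ x = (laguerrePoly m γ).eval x := by
  simp [laguerre, laguerrePoly, laguerreCoeff, eval_finsetSum]

lemma coeff_laguerrePoly (m : ℕ) (γ : ℝ) (k : ℕ) :
    (laguerrePoly m γ).coeff k = if k ≤ m then laguerreCoeff m γ k else 0 := by
  simp [laguerrePoly, coeff_X_pow]

lemma laguerreCoeff_succ {m k : ℕ} (γ : ℝ) (hk : k < m) :
    ((k : ℝ) + 1) * (γ + k + 1) * laguerreCoeff m γ (k + 1)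
      + ((m : ℝ) - k) * laguerreCoeff m γ k = 0 := by
  obtain ⟨t, rfl⟩ : ∃ t, m = k + t + 1 := ⟨m - k - 1, by omega⟩
  have hsub : k + t + 1 - k = t + 1 := by omega
  have hsub' : k + t + 1 - (k + 1) = t := by omega
  have hpoch : (ascPochhammer ℝ (t + 1)).eval (γ + k + 1)
      = (γ + k + 1) * (ascPochhammer ℝ t).eval (γ + (k + 1 : ℕ) + 1) := by
    rw [ascPochhammer_succ_left, eval_mul, eval_X, eval_comp, eval_add, eval_X, eval_one]
    push_cast
    ring_nf
  rw [laguerreCoeff, laguerreCoeff, hsub, hsub', hpoch]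
  push_cast [Nat.factorial_succ]
  field_simp
  ring

lemma laguerrePoly_coeff_recurrence (m : ℕ) (γ : ℝ) (k : ℕ) :
    ((k : ℝ) + 1) * (γ + k + 1) * (laguerrePoly m γ).coeff (k + 1)
      + ((m : ℝ) - k) * (laguerrePoly m γ).coeff k = 0 := by
  simp only [coeff_laguerrePoly]
  rcases lt_trichotomy k m with hk | rfl | hk
  · simpa [hk.le, Nat.succ_le_of_lt hk] using laguerreCoeff_succ γ hk
  · simp
  · have hk' : ¬k + 1 ≤ m := by omega
    simp [hk.not_ge, hk']

lemma coeff_X_mul_derivative {R : Type*} [Semiring R] (p : R[X]) (k : ℕ) :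
    (X * derivative p).coeff k = k * p.coeff k := by
  cases k with
  | zero => simp
  | succ k => rw [coeff_X_mul, coeff_derivative, ← Nat.cast_succ, Nat.cast_comm]

lemma laguerreOpPoly_laguerrePoly (m : ℕ) (γ : ℝ) :
    laguerreOpPoly γ (laguerrePoly m γ) = -C (m : ℝ) * laguerrePoly m γ := by
  ext k
  have := laguerrePoly_coeff_recurrence m γ k
  simp only [laguerreOpPoly, coeff_add, sub_mul, coeff_sub, coeff_C_mul, coeff_X_mul_derivative,
    coeff_derivative, neg_mul, coeff_neg]
  linear_combination this

lemma laguerreOpPoly_C_mul (γ c : ℝ) (p : ℝ[X]) :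
    laguerreOpPoly γ (C c * p) = C c * laguerreOpPoly γ p := by
  simp only [laguerreOpPoly, derivative_C_mul]
  ring

lemma laguerreOpPoly_X_mul (β : ℝ) (p : ℝ[X]) :
    laguerreOpPoly β (X * p) = X * laguerreOpPoly (β + 2) p + C (β + 1) * p - X * p := by
  simp only [laguerreOpPoly, derivative_mul, derivative_X, one_mul, map_add, C_1, C_ofNat]
  ring

lemma laguerreOpPoly_X_mul_laguerrePoly (m : ℕ) (β : ℝ) :
    laguerreOpPoly β (X * laguerrePoly m (β + 2)) + C ((m : ℝ) + 1) * (X * laguerrePoly m (β + 2))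
      = C (β + 1) * laguerrePoly m (β + 2) := by
  rw [laguerreOpPoly_X_mul, laguerreOpPoly_laguerrePoly]
  simp only [map_add, C_1]
  ring

lemma lagOp_eval (γ : ℝ) (p : ℝ[X]) (x : ℝ) :
    lagOp γ (fun y => p.eval y) x = (laguerreOpPoly γ p).eval x := by
  have hderiv : ∀ q : ℝ[X], deriv (fun y => q.eval y) = fun y => (derivative q).eval y :=
    fun q => funext fun _ => q.deriv
  simp [lagOp, laguerreOpPoly, hderiv]

lemma factorial_mul_ascPochhammer_eval {S : Type*} [Semiring S] (a b : ℕ) :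
    (a.factorial : S) * (ascPochhammer S b).eval ((a : S) + 1) = (a + b).factorial := by
  rw [← Nat.cast_succ, ascPochhammer_nat_eq_natCast_ascFactorial, ← Nat.cast_mul,
    Nat.factorial_mul_ascFactorial]

lemma factorial_mul_ascPochhammer_eval_comm {S : Type*} [Semiring S] (a b : ℕ) :
    ((a + 1).factorial : S) * (ascPochhammer S b).eval ((a : S) + 2)
      = (b + 1).factorial * (ascPochhammer S a).eval ((b : S) + 2) := by
  have ha := factorial_mul_ascPochhammer_eval (S := S) (a + 1) b
  have hb := factorial_mul_ascPochhammer_eval (S := S) (b + 1) a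
  simp only [Nat.cast_add, Nat.cast_one, add_assoc, one_add_one_eq_two] at ha hb
  rw [ha, hb, show a + (1 + b) = b + (1 + a) by omega]

theorem laguerre_type_first_identity (α : ℕ) (n : ℕ) (hn : 1 ≤ n) (x : ℝ) :
    ((α + 2).factorial : ℝ) * (lagOp (α : ℝ) (Tpoly n α) x + (n : ℝ) * Tpoly n α x)
      = -((ascPochhammer ℝ α).eval ((n : ℝ) + 1)) * ((α : ℝ) + 1) * ((α : ℝ) + 2)
          * laguerre (n - 1) ((α : ℝ) + 2) x := by
  obtain ⟨m, rfl⟩ : ∃ m, n = m + 1 := ⟨n - 1, by omega⟩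
  set c := -((ascPochhammer ℝ m).eval ((α : ℝ) + 2) / (m + 1).factorial)
  set L := laguerrePoly m ((α : ℝ) + 2)
  have hT : Tpoly (m + 1) α = fun y => (C c * (X * L)).eval y := by
    funext y
    simp only [Tpoly, Nat.add_sub_cancel, laguerre_eq_eval, eval_mul, eval_C, eval_X, c, L]
    ring
  have hOp : laguerreOpPoly α (C c * (X * L)) + C ((m : ℝ) + 1) * (C c * (X * L))
      = C (c * (α + 1)) * L := by
    rw [laguerreOpPoly_C_mul, mul_left_comm, ← mul_add, laguerreOpPoly_X_mul_laguerrePoly,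
      ← mul_assoc, ← C_mul]
  have hconst : ((α + 2).factorial : ℝ) * c * (α + 1)
      = -(ascPochhammer ℝ α).eval ((m : ℝ) + 2) * (α + 1) * (α + 2) := by
    rw [Nat.factorial_succ (α + 1)]
    simp only [c]
    push_cast
    field_simp
    linear_combination -(α + 2 : ℝ) * factorial_mul_ascPochhammer_eval_comm (S := ℝ) α m
  have hL := congrArg (eval x) hOp
  rw [hT, lagOp_eval, laguerre_eq_eval, show ((m + 1 : ℕ) : ℝ) + 1 = m + 2 by push_cast; ring]
  simp only [eval_add, eval_mul, eval_C, eval_X] at hL ⊢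
  push_cast
  linear_combination ((α + 2).factorial : ℝ) * hL + L.eval x * hconst
end

section
/- For α ∈ ℕ and any smooth function y on ℝ, the operator (−1)^{α+1} e^x x D_x^{α+2}( e^{−x} D_x^{α+2}( x^{α+1} y(x) ) ) equals Σ_{i=1}^{2α+4} d_i^α(x) D_x^i y(x), where d_i^α(x) = Σ_{j=max(1,i−α−2)}^{min(i,α+2)} (−1)^{i+j+1} binom(α+1, j−1) binom(α+2, i−j) (i+1)_{α+2−j} x^j. -/
open Real Finset
open scoped ContDiff



private lemma hasDerivAt_iteratedDeriv' {f : ℝ → ℝ} (hf : ContDiff ℝ ∞ f) (k : ℕ) (x : ℝ) :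
    HasDerivAt (iteratedDeriv k f) (iteratedDeriv (k + 1) f x) x := by
  have h1 : ContDiff ℝ ∞ (iteratedDeriv k f) := by
    rw [iteratedDeriv_eq_iterate]; exact hf.iterate_deriv k
  have := (h1.differentiable (by simp)).differentiableAt (x := x)
  simpa [iteratedDeriv_succ] using this.hasDerivAt

private lemma leibniz_iteratedDeriv (f g : ℝ → ℝ) (hf : ContDiff ℝ ∞ f)
    (hg : ContDiff ℝ ∞ g) (n : ℕ) (x : ℝ) :
    iteratedDeriv n (fun t => f t * g t) x
      = ∑ k ∈ Finset.range (n + 1),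
          (n.choose k : ℝ) * iteratedDeriv k f x * iteratedDeriv (n - k) g x := by
  induction n generalizing x with
  | zero => simp
  | succ n ih =>
    rw [iteratedDeriv_succ, funext ih]
    have H : HasDerivAt
        (fun x => ∑ k ∈ Finset.range (n + 1),
          (n.choose k : ℝ) * iteratedDeriv k f x * iteratedDeriv (n - k) g x)
        (∑ k ∈ Finset.range (n + 1), (n.choose k : ℝ) *
          (iteratedDeriv (k+1) f x * iteratedDeriv (n - k) g x
            + iteratedDeriv k f x * iteratedDeriv (n - k + 1) g x)) x := by
      refine HasDerivAt.fun_sum fun k _ => ?_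
      have := ((hasDerivAt_iteratedDeriv' hf k x).mul
        (hasDerivAt_iteratedDeriv' hg (n - k) x)).const_mul (n.choose k : ℝ)
      simpa [mul_assoc, mul_add] using this
    rw [H.deriv]
    have key := Finset.sum_choose_succ_mul
      (fun a b => iteratedDeriv a f x * iteratedDeriv b g x) n
    simp only [mul_assoc]
    rw [key, ← Finset.sum_add_distrib]
    refine Finset.sum_congr rfl fun k hk => ?_
    simp only [Finset.mem_range, Nat.lt_succ_iff] at hk
    rw [show n - k + 1 = n + 1 - k by omega]
    ring


private lemma iteratedDeriv_pow' (m : ℕ) : ∀ (k : ℕ) (x : ℝ),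
    iteratedDeriv k (fun s : ℝ => s ^ m) x = (m.descFactorial k : ℝ) * x ^ (m - k)
  | 0, x => by simp
  | k + 1, x => by
    rw [iteratedDeriv_succ, funext (iteratedDeriv_pow' m k),
      deriv_const_mul _ (differentiableAt_pow _), deriv_pow_field]
    rw [Nat.descFactorial_succ, Nat.cast_mul, Nat.sub_sub]
    ring

private lemma iteratedDeriv_exp_neg' : ∀ (k : ℕ) (x : ℝ),
    iteratedDeriv k (fun t : ℝ => Real.exp (-t)) x = (-1 : ℝ) ^ k * Real.exp (-x)
  | 0, x => by simp
  | k + 1, x => by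
    have hd : ∀ z : ℝ, HasDerivAt (fun t : ℝ => Real.exp (-t)) (-Real.exp (-z)) z := fun z => by
      simpa using (hasDerivAt_neg z).exp
    rw [iteratedDeriv_succ, funext (iteratedDeriv_exp_neg' k),
      deriv_const_mul _ (hd x).differentiableAt, (hd x).deriv]
    ring

private lemma iteratedDeriv_comp_iteratedDeriv (f : ℝ → ℝ) (s n : ℕ) (x : ℝ) :
    iteratedDeriv s (iteratedDeriv n f) x = iteratedDeriv (s + n) f x := by
  simp only [iteratedDeriv_eq_iterate]
  rw [Function.iterate_add_apply]

private lemma key_nat (a m i : ℕ) :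
    (i + a).choose a * m.descFactorial a = m.choose a * (i + a).descFactorial a := by
  apply Nat.eq_of_mul_eq_mul_left (Nat.factorial_pos a)
  calc a.factorial * ((i + a).choose a * m.descFactorial a)
      = (a.factorial * (i + a).choose a) * m.descFactorial a := by ring
    _ = (i + a).descFactorial a * m.descFactorial a := by
        rw [← Nat.descFactorial_eq_factorial_mul_choose]
    _ = (a.factorial * m.choose a) * (i + a).descFactorial a := by
        rw [← Nat.descFactorial_eq_factorial_mul_choose]; ring
    _ = a.factorial * (m.choose a * (i + a).descFactorial a) := by ring

private lemma poch_eval (b i : ℕ) :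
    (ascPochhammer ℝ b).eval ((i : ℝ) + 1) = ((i + b).descFactorial b : ℝ) := by
  have h1 : ((i : ℝ) + 1) = ((i + 1 : ℕ) : ℝ) := by push_cast; ring
  rw [h1, ← ascPochhammer_eval_cast, ascPochhammer_nat_eq_descFactorial]
  congr 2
  omega


noncomputable def lagTypeOp (α : ℕ) (y : ℝ → ℝ) : ℝ → ℝ := fun x =>
  (-1 : ℝ) ^ (α + 1) * Real.exp x * x *
    iteratedDeriv (α + 2)
      (fun t => Real.exp (-t) * iteratedDeriv (α + 2) (fun s => s ^ (α + 1) * y s) t) x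

noncomputable def dCoeff (α : ℕ) (i : ℕ) : ℝ → ℝ := fun x =>
  ∑ j ∈ Finset.Icc (max 1 (i - α - 2)) (min i (α + 2)),
    (-1 : ℝ) ^ (i + j + 1) * (α + 1).choose (j - 1) * (α + 2).choose (i - j)
      * (ascPochhammer ℝ (α + 2 - j)).eval ((i : ℝ) + 1) * x ^ j

theorem lagTypeOp_expansion (α : ℕ) (y : ℝ → ℝ) (hy : ContDiff ℝ (⊤ : ℕ∞) y) (x : ℝ) :
    lagTypeOp α y x
      = ∑ i ∈ Finset.Icc 1 (2 * α + 4), dCoeff α i x * iteratedDeriv i y x := by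
  have hy' : ContDiff ℝ ∞ y := hy.of_le (by simp)
  have hinnerC : ContDiff ℝ ∞ (fun s : ℝ => s ^ (α + 1) * y s) :=
    (contDiff_id.pow _).mul hy'
  have hIterC : ContDiff ℝ ∞ (iteratedDeriv (α + 2) fun s : ℝ => s ^ (α + 1) * y s) := by
    rw [iteratedDeriv_eq_iterate]; exact hinnerC.iterate_deriv _
  have hexpC : ContDiff ℝ ∞ (fun t : ℝ => Real.exp (-t)) :=
    Real.contDiff_exp.comp contDiff_neg
  -- inner expansion at any order N ≥ α+1
  have hInner : ∀ N : ℕ, α + 1 ≤ N → ∀ t : ℝ,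
      iteratedDeriv N (fun s : ℝ => s ^ (α + 1) * y s) t
        = ∑ j ∈ Finset.range (α + 2), (N.choose j : ℝ) * ((α + 1).descFactorial j : ℝ)
            * t ^ (α + 1 - j) * iteratedDeriv (N - j) y t := by
    intro N hN t
    have hpowC : ContDiff ℝ ∞ (fun s : ℝ => s ^ (α + 1)) := by exact contDiff_id.pow _
    rw [leibniz_iteratedDeriv (fun s : ℝ => s ^ (α + 1)) y hpowC hy' N t]
    rw [← Finset.sum_subset (Finset.range_subset_range.2 (by omega : α + 2 ≤ N + 1))]
    · exact Finset.sum_congr rfl fun j hj => by rw [iteratedDeriv_pow']; ring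
    · intro j _ hj
      simp only [Finset.mem_range, not_lt] at hj
      rw [iteratedDeriv_pow', Nat.descFactorial_eq_zero_iff_lt.2 (by omega)]
      simp
  -- expand LHS
  rw [show lagTypeOp α y x = (-1 : ℝ) ^ (α + 1) * Real.exp x * x *
    iteratedDeriv (α + 2)
      (fun t => Real.exp (-t) * iteratedDeriv (α + 2) (fun s => s ^ (α + 1) * y s) t) x from rfl]
  rw [leibniz_iteratedDeriv _ _ hexpC hIterC, Finset.mul_sum]
  have hL : ∀ k ∈ Finset.range (α + 2 + 1),
      (-1 : ℝ) ^ (α + 1) * Real.exp x * x *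
        (((α + 2).choose k : ℝ) * iteratedDeriv k (fun t : ℝ => Real.exp (-t)) x *
          iteratedDeriv (α + 2 - k)
            (iteratedDeriv (α + 2) fun s : ℝ => s ^ (α + 1) * y s) x)
      = ∑ j ∈ Finset.range (α + 2),
          (-1 : ℝ) ^ (α + 1 + k) * ((α + 2).choose k : ℝ)
            * ((2 * α + 4 - k).choose j : ℝ) * ((α + 1).descFactorial j : ℝ)
            * x ^ (α + 2 - j) * iteratedDeriv (2 * α + 4 - k - j) y x := by
    intro k hk
    simp only [Finset.mem_range] at hk
    rw [iteratedDeriv_exp_neg', iteratedDeriv_comp_iteratedDeriv,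
      show (α + 2 - k) + (α + 2) = 2 * α + 4 - k by omega,
      hInner (2 * α + 4 - k) (by omega) x, Finset.mul_sum, Finset.mul_sum]
    refine Finset.sum_congr rfl fun j hj => ?_
    simp only [Finset.mem_range] at hj
    have hx1 : Real.exp x * Real.exp (-x) = 1 := by rw [← Real.exp_add]; simp
    have hpow : x * x ^ (α + 1 - j) = x ^ (α + 2 - j) := by
      rw [← pow_succ']
      congr 1
      omega
    rw [pow_add, ← hpow]
    linear_combination
      ((-1 : ℝ) ^ (α + 1) * (-1) ^ k * ((α + 2).choose k : ℝ) * x * x ^ (α + 1 - j)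
        * ((2 * α + 4 - k).choose j : ℝ) * ((α + 1).descFactorial j : ℝ)
        * iteratedDeriv (2 * α + 4 - k - j) y x) * hx1
  rw [Finset.sum_congr rfl hL]
  -- expand RHS
  have hR : ∀ i ∈ Finset.Icc 1 (2 * α + 4),
      dCoeff α i x * iteratedDeriv i y x
        = ∑ j ∈ Finset.Icc (max 1 (i - α - 2)) (min i (α + 2)),
            (-1 : ℝ) ^ (i + j + 1) * ((α + 1).choose (j - 1) : ℝ)
              * ((α + 2).choose (i - j) : ℝ)
              * ((i + (α + 2 - j)).descFactorial (α + 2 - j) : ℝ)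
              * x ^ j * iteratedDeriv i y x := by
    intro i _
    rw [dCoeff, Finset.sum_mul]
    exact Finset.sum_congr rfl fun j _ => by rw [poch_eval]
  rw [Finset.sum_congr rfl hR]
  -- reindex
  rw [Finset.sum_sigma', Finset.sum_sigma']
  refine Finset.sum_bij' (fun p _ => ⟨2 * α + 4 - p.1 - p.2, α + 2 - p.2⟩)
    (fun q _ => ⟨α + 2 + q.2 - q.1, α + 2 - q.2⟩) ?_ ?_ ?_ ?_ ?_
  · rintro ⟨k, j⟩ hp
    simp only [Finset.mem_sigma, Finset.mem_range, Finset.mem_Icc] at hp ⊢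
    omega
  · rintro ⟨i, j⟩ hq
    simp only [Finset.mem_sigma, Finset.mem_range, Finset.mem_Icc] at hq ⊢
    omega
  · rintro ⟨k, j⟩ hp
    simp only [Finset.mem_sigma, Finset.mem_range] at hp
    simp only [Sigma.mk.inj_iff, heq_eq_eq]
    constructor <;> omega
  · rintro ⟨i, j⟩ hq
    simp only [Finset.mem_sigma, Finset.mem_Icc] at hq
    simp only [Sigma.mk.inj_iff, heq_eq_eq]
    constructor <;> omega
  · rintro ⟨k, j⟩ hp
    simp only [Finset.mem_sigma, Finset.mem_range] at hp
    obtain ⟨hk, hj⟩ := hp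
    rw [show α + 2 - (α + 2 - j) = j by omega,
      show 2 * α + 4 - k - j - (α + 2 - j) = α + 2 - k by omega,
      show (α + 2 - j) - 1 = α + 1 - j by omega,
      show 2 * α + 4 - k - j + j = 2 * α + 4 - k by omega,
      show (α + 1).choose (α + 1 - j) = (α + 1).choose j from Nat.choose_symm (by omega),
      show (α + 2).choose (α + 2 - k) = (α + 2).choose k from Nat.choose_symm (by omega),
      show (-1 : ℝ) ^ (2 * α + 4 - k - j + (α + 2 - j) + 1) = (-1) ^ (α + 1 + k) by
        rw [neg_one_pow_eq_pow_mod_two, neg_one_pow_eq_pow_mod_two (n := α + 1 + k)]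
        congr 1
        omega]
    have hkey : ((2 * α + 4 - k).choose j : ℝ) * ((α + 1).descFactorial j : ℝ)
        = ((α + 1).choose j : ℝ) * ((2 * α + 4 - k).descFactorial j : ℝ) := by
      have h := key_nat j (α + 1) (2 * α + 4 - k - j)
      rw [show 2 * α + 4 - k - j + j = 2 * α + 4 - k by omega] at h
      exact_mod_cast h
    linear_combination ((-1 : ℝ) ^ (α + 1 + k) * ((α + 2).choose k : ℝ)
      * x ^ (α + 2 - j) * iteratedDeriv (2 * α + 4 - k - j) y x) * hkey
end

section
/- For α ∈ ℕ and any smooth function u on ℝ, with L_2^γ y = x y'' + (γ+1−x) y', the iterated products satisfy Π_{j=1}^{α+1}( L_2^{α+1} − j ) u = Π_{j=1}^{α+1}( L_2^{2j−1} − j ) u, where the factors are applied successively from j = 1 up to j = α+1. -/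
open Real Finset
open scoped ContDiff

noncomputable def prodOp (f : ℕ → (ℝ → ℝ) → (ℝ → ℝ)) : ℕ → (ℝ → ℝ) → (ℝ → ℝ)
  | 0, u => u
  | k + 1, u => f (k + 1) (prodOp f k u)

noncomputable def lagF (c j : ℝ) (u : ℝ → ℝ) : ℝ → ℝ := fun x =>
  lagOp (c + j) u x - j * u x

noncomputable def lagQ : List ℝ → ℝ → (ℝ → ℝ) → (ℝ → ℝ)
  | [], _, u => u
  | c :: cs, j, u => lagQ cs (j + 1) (lagF c j u)

lemma derivLag (B j : ℝ) (u : ℝ → ℝ) (hu : ContDiff ℝ ∞ u) :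
    deriv (fun x => x * deriv (deriv u) x + (B - x) * deriv u x - j * u x)
      = fun x => x * deriv (deriv (deriv u)) x + (B + 1 - x) * deriv (deriv u) x
          - (1 + j) * deriv u x := by
  have h0 : Differentiable ℝ u := hu.differentiable (by simp)
  have hu1 : ContDiff ℝ ∞ (deriv u) := (contDiff_infty_iff_deriv.mp hu).2
  have hu2 : ContDiff ℝ ∞ (deriv (deriv u)) := (contDiff_infty_iff_deriv.mp hu1).2
  have h1 : Differentiable ℝ (deriv u) := hu1.differentiable (by simp)
  have h2 : Differentiable ℝ (deriv (deriv u)) := hu2.differentiable (by simp)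
  funext x
  have H : HasDerivAt (fun x => x * deriv (deriv u) x + (B - x) * deriv u x - j * u x)
      ((1 * deriv (deriv u) x + x * deriv (deriv (deriv u)) x)
        + ((0 - 1) * deriv u x + (B - x) * deriv (deriv u) x) - j * deriv u x) x :=
    (((hasDerivAt_id' x).mul (h2 x).hasDerivAt).add
      (((hasDerivAt_const x B).sub (hasDerivAt_id' x)).mul (h1 x).hasDerivAt)).sub
      (((h0 x).hasDerivAt).const_mul j)
  rw [H.deriv]; ring

lemma lagF_contDiff (c j : ℝ) (u : ℝ → ℝ) (hu : ContDiff ℝ ∞ u) :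
    ContDiff ℝ ∞ (lagF c j u) := by
  have hu1 : ContDiff ℝ ∞ (deriv u) := (contDiff_infty_iff_deriv.mp hu).2
  have hu2 : ContDiff ℝ ∞ (deriv (deriv u)) := (contDiff_infty_iff_deriv.mp hu1).2
  exact ((contDiff_id.mul hu2).add ((contDiff_const.sub contDiff_id).mul hu1)).sub
    (contDiff_const.mul hu)

lemma lagF_swap (a b j : ℝ) (u : ℝ → ℝ) (hu : ContDiff ℝ ∞ u) :
    lagF a (j + 1) (lagF b j u) = lagF b (j + 1) (lagF a j u) := by
  have hu1 : ContDiff ℝ ∞ (deriv u) := (contDiff_infty_iff_deriv.mp hu).2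
  funext x
  rw [show lagF b j u = (fun x => x * deriv (deriv u) x + (b + j + 1 - x) * deriv u x - j * u x)
        from rfl,
      show lagF a j u = (fun x => x * deriv (deriv u) x + (a + j + 1 - x) * deriv u x - j * u x)
        from rfl]
  simp only [lagF, lagOp]
  rw [derivLag (b + j + 1) j u hu, derivLag (a + j + 1) j u hu,
      derivLag (b + j + 1 + 1) (1 + j) (deriv u) hu1,
      derivLag (a + j + 1 + 1) (1 + j) (deriv u) hu1]
  ring

lemma lagQ_perm {cs cs' : List ℝ} (h : cs.Perm cs') :
    ∀ (j : ℝ) (u : ℝ → ℝ), ContDiff ℝ ∞ u → lagQ cs j u = lagQ cs' j u := by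
  induction h with
  | nil => intro j u hu; rfl
  | cons c h ih => intro j u hu; simp only [lagQ]; exact ih _ _ (lagF_contDiff c j u hu)
  | swap a b cs => intro j u hu; simp only [lagQ]; rw [lagF_swap a b j u hu]
  | trans h1 h2 ih1 ih2 => intro j u hu; rw [ih1 j u hu, ih2 j u hu]

lemma lagQ_append : ∀ (cs : List ℝ) (c j : ℝ) (u : ℝ → ℝ),
    lagQ (cs ++ [c]) j u = lagF c (j + cs.length) (lagQ cs j u)
  | [], c, j, u => by simp [lagQ]
  | d :: cs, c, j, u => by
    simp only [List.cons_append, lagQ, List.append_eq]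
    rw [lagQ_append cs c (j + 1) (lagF d j u)]
    have : j + 1 + (cs.length : ℝ) = j + ((d :: cs).length : ℝ) := by
      push_cast [List.length_cons]; ring
    rw [this]

lemma prodOp_eq_lagQ (g : ℕ → ℝ) (u : ℝ → ℝ) :
    ∀ n, prodOp (fun j v => fun x => lagOp (g j) v x - (j : ℝ) * v x) n u
      = lagQ ((List.range n).map (fun i => g (i + 1) - ((i : ℝ) + 1))) 1 u := by
  intro n
  induction n with
  | zero => rfl
  | succ n ih =>
    rw [List.range_succ, List.map_append]
    simp only [List.map_cons, List.map_nil]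
    rw [lagQ_append]
    simp only [List.length_map, List.length_range]
    simp only [prodOp]
    rw [ih]
    funext x
    simp only [lagF, lagOp]
    push_cast
    ring

theorem lagOp_product_identity (α : ℕ) (u : ℝ → ℝ) (hu : ContDiff ℝ (⊤ : ℕ∞) u) :
    prodOp (fun j v => fun x => lagOp ((α : ℝ) + 1) v x - (j : ℝ) * v x) (α + 1) u
      = prodOp (fun j v => fun x => lagOp (2 * (j : ℝ) - 1) v x - (j : ℝ) * v x) (α + 1) u := by
  have hu' : ContDiff ℝ ∞ u := hu.of_le (by simp)
  have h1 := prodOp_eq_lagQ (fun _ => (α : ℝ) + 1) u (α + 1)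
  have h2 := prodOp_eq_lagQ (fun j => 2 * (j : ℝ) - 1) u (α + 1)
  have e2 : (fun i : ℕ => 2 * (((i + 1 : ℕ)) : ℝ) - 1 - ((i : ℝ) + 1)) = fun i : ℕ => (i : ℝ) := by
    funext i; push_cast; ring
  have e1 : ((List.range (α + 1)).map (fun i : ℕ => ((α : ℝ) + 1) - ((i : ℝ) + 1)))
      = ((List.range (α + 1)).map (fun i : ℕ => (i : ℝ))).reverse := by
    have hrev : (List.range (α + 1)).reverse = (List.range (α + 1)).map (fun i => α - i) := by
      conv_lhs => rw [List.range_eq_range']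
      rw [List.reverse_range']
      exact List.map_congr_left (fun i _ => show 0 + (α + 1) - 1 - i = α - i by omega)
    rw [← List.map_reverse, hrev, List.map_map]
    refine List.map_congr_left ?_
    intro i hi
    have hi' : i < α + 1 := List.mem_range.mp hi
    simp only [Function.comp]
    rw [Nat.cast_sub (by omega : i ≤ α)]
    ring
  have hperm : ((List.range (α + 1)).map (fun i : ℕ => ((α : ℝ) + 1) - ((i : ℝ) + 1))).Perm
      ((List.range (α + 1)).map (fun i : ℕ => 2 * (((i + 1 : ℕ)) : ℝ) - 1 - ((i : ℝ) + 1))) := by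
    rw [e1, e2]
    exact List.reverse_perm _
  calc prodOp (fun j v => fun x => lagOp ((α : ℝ) + 1) v x - (j : ℝ) * v x) (α + 1) u
      = lagQ ((List.range (α + 1)).map (fun i : ℕ => ((α : ℝ) + 1) - ((i : ℝ) + 1))) 1 u := h1
    _ = lagQ ((List.range (α + 1)).map
          (fun i : ℕ => 2 * (((i + 1 : ℕ)) : ℝ) - 1 - ((i : ℝ) + 1))) 1 u :=
        lagQ_perm hperm 1 u hu'
    _ = prodOp (fun j v => fun x => lagOp (2 * (j : ℝ) - 1) v x - (j : ℝ) * v x) (α + 1) u :=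
        h2.symm
end

section
/- For integers j ≥ 1, α ≥ 0 and any smooth function u on ℝ, the commutation relation ( L_2^{α+j+2} − j − 1 ) ∘ ( L_2^{α+1} − j ) u = ( L_2^{α+2} − j − 1 ) ∘ ( L_2^{α+j+1} − j ) u holds, where L_2^γ y = x y'' + (γ+1−x) y'. -/
open Real

private lemma aux1 (u : ℝ → ℝ) (hu : ContDiff ℝ (⊤ : ℕ∞) u) (c j : ℝ) :
    deriv (fun t => t * deriv (deriv u) t + (c - t) * deriv u t - j * u t)
      = fun x => x * deriv (deriv (deriv u)) x + (c + 1 - x) * deriv (deriv u) x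
          - (j + 1) * deriv u x := by
  have hu1 : ContDiff ℝ (⊤ : ℕ∞) (deriv u) := (contDiff_infty_iff_deriv.mp hu).2
  have hu2 : ContDiff ℝ (⊤ : ℕ∞) (deriv (deriv u)) := (contDiff_infty_iff_deriv.mp hu1).2
  funext x
  have h1 : HasDerivAt u (deriv u x) x := ((contDiff_infty_iff_deriv.mp hu).1 x).hasDerivAt
  have h2 : HasDerivAt (deriv u) (deriv (deriv u) x) x :=
    ((contDiff_infty_iff_deriv.mp hu1).1 x).hasDerivAt
  have h3 : HasDerivAt (deriv (deriv u)) (deriv (deriv (deriv u)) x) x :=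
    ((contDiff_infty_iff_deriv.mp hu2).1 x).hasDerivAt
  have H : HasDerivAt (fun t => t * deriv (deriv u) t + (c - t) * deriv u t - j * u t)
      (1 * deriv (deriv u) x + x * deriv (deriv (deriv u)) x
        + ((0 - 1) * deriv u x + (c - x) * deriv (deriv u) x) - j * deriv u x) x :=
    (((hasDerivAt_id x).mul h3).add
      (((hasDerivAt_const x c).sub (hasDerivAt_id x)).mul h2)).sub (h1.const_mul j)
  rw [H.deriv]; ring

theorem lagOp_commutation (j : ℕ) (hj : 1 ≤ j) (α : ℕ) (u : ℝ → ℝ) (hu : ContDiff ℝ (⊤ : ℕ∞) u)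
    (x : ℝ) :
    lagOp ((α : ℝ) + (j : ℝ) + 2) (fun t => lagOp ((α : ℝ) + 1) u t - (j : ℝ) * u t) x
        - ((j : ℝ) + 1) * (lagOp ((α : ℝ) + 1) u x - (j : ℝ) * u x)
      = lagOp ((α : ℝ) + 2) (fun t => lagOp ((α : ℝ) + (j : ℝ) + 1) u t - (j : ℝ) * u t) x
        - ((j : ℝ) + 1) * (lagOp ((α : ℝ) + (j : ℝ) + 1) u x - (j : ℝ) * u x) := by
  have hu' : ContDiff ℝ (⊤ : ℕ∞) u := hu.of_le (by simp)
  have hu1 : ContDiff ℝ (⊤ : ℕ∞) (deriv u) := (contDiff_infty_iff_deriv.mp hu').2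
  have key : ∀ c jr : ℝ,
      (deriv (fun t => t * deriv (deriv u) t + (c + 1 - t) * deriv u t - jr * u t)
        = fun y => y * deriv (deriv (deriv u)) y + (c + 1 + 1 - y) * deriv (deriv u) y
            - (jr + 1) * deriv u y) ∧
      (deriv (deriv (fun t => t * deriv (deriv u) t + (c + 1 - t) * deriv u t - jr * u t))
        = fun y => y * deriv (deriv (deriv (deriv u))) y
            + (c + 1 + 1 + 1 - y) * deriv (deriv (deriv u)) y
            - (jr + 1 + 1) * deriv (deriv u) y) := by
    intro c jr
    refine ⟨aux1 u hu' (c + 1) jr, ?_⟩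
    rw [aux1 u hu' (c + 1) jr]
    exact aux1 (deriv u) hu1 (c + 1 + 1) (jr + 1)
  obtain ⟨dL1, dL2⟩ := key ((α : ℝ) + 1) (j : ℝ)
  obtain ⟨dR1, dR2⟩ := key ((α : ℝ) + (j : ℝ) + 1) (j : ℝ)
  simp only [lagOp]
  rw [dL2, dR2, dL1, dR1]
  ring
end

section
/- For every β ∈ ℕ and every smooth function y on (0,∞): (x^{−1}D_x)^{2β}( x^{2β} y(x) ) = ( D_x^2 + (2β+1)/x · D_x )^{β} y(x), where (x^{−1}D_x) denotes the operator y ↦ y'(x)/x. -/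
open Real

noncomputable def deltaOp (y : ℝ → ℝ) : ℝ → ℝ := fun x => deriv y x / x

noncomputable def besselOp (b : ℝ) (y : ℝ → ℝ) : ℝ → ℝ := fun x =>
  deriv (deriv y) x + b / x * deriv y x

open Set

noncomputable def shiftOp (c : ℝ) (g : ℝ → ℝ) : ℝ → ℝ := fun x => x * deriv g x + c * g x
noncomputable def shifts (l : List ℝ) (g : ℝ → ℝ) : ℝ → ℝ := l.foldr shiftOp g

lemma eqOn_deriv {f g : ℝ → ℝ} (h : EqOn f g (Ioi 0)) : EqOn (deriv f) (deriv g) (Ioi 0) :=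
  fun _ hx => Filter.EventuallyEq.deriv_eq (Filter.eventuallyEq_of_mem (isOpen_Ioi.mem_nhds hx) h)

lemma shiftOp_smooth {c : ℝ} {g : ℝ → ℝ} (hg : ContDiffOn ℝ (⊤:ℕ∞) g (Ioi 0)) :
    ContDiffOn ℝ (⊤:ℕ∞) (shiftOp c g) (Ioi 0) := by
  have hd := hg.deriv_of_isOpen (m := (⊤:ℕ∞)) isOpen_Ioi (by simp)
  exact (contDiffOn_id.mul hd).add (contDiffOn_const.mul hg)

lemma shifts_smooth {g : ℝ → ℝ} (hg : ContDiffOn ℝ (⊤:ℕ∞) g (Ioi 0)) :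
    ∀ l : List ℝ, ContDiffOn ℝ (⊤:ℕ∞) (shifts l g) (Ioi 0)
  | [] => hg
  | c :: l => shiftOp_smooth (shifts_smooth hg l)

lemma shiftOp_congr {c : ℝ} {f g : ℝ → ℝ} (h : EqOn f g (Ioi 0)) :
    EqOn (shiftOp c f) (shiftOp c g) (Ioi 0) := fun x hx => by
  simp only [shiftOp]; rw [eqOn_deriv h hx, h hx]

lemma hasDeriv_rpow_mul {S : ℝ → ℝ} (hS : ContDiffOn ℝ (⊤:ℕ∞) S (Ioi 0)) (c x : ℝ) (hx : x ∈ Ioi 0) :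
    HasDerivAt (fun t => t ^ c * S t) (x ^ (c-1) * shiftOp c S x) x := by
  have hxpos : (0:ℝ) < x := hx
  have h1 : HasDerivAt (fun t : ℝ => t ^ c) (c * x ^ (c-1)) x :=
    Real.hasDerivAt_rpow_const (Or.inl hxpos.ne')
  have h2 : HasDerivAt S (deriv S x) x :=
    ((hS.differentiableOn (by simp)).differentiableAt (isOpen_Ioi.mem_nhds hx)).hasDerivAt
  refine (h1.mul h2).congr_deriv ?_
  have hxc : x ^ c = x ^ (c-1) * x := by
    rw [show c = (c-1)+1 by ring, Real.rpow_add hxpos, Real.rpow_one]; ring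
  simp only [shiftOp]; rw [hxc]; ring

lemma hasDerivAt_of_smooth {S : ℝ → ℝ} (hS : ContDiffOn ℝ (⊤:ℕ∞) S (Ioi 0)) {x : ℝ}
    (hx : x ∈ Ioi 0) : HasDerivAt S (deriv S x) x :=
  ((hS.differentiableOn (by simp)).differentiableAt (isOpen_Ioi.mem_nhds hx)).hasDerivAt

lemma rpow_succ' {x : ℝ} (hx : 0 < x) (c : ℝ) : x ^ (c+1) = x ^ c * x := by
  rw [Real.rpow_add hx, Real.rpow_one]


lemma delta_step {S : ℝ → ℝ} (hS : ContDiffOn ℝ (⊤:ℕ∞) S (Ioi 0)) (c : ℝ) :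
    EqOn (deltaOp (fun t => t ^ c * S t)) (fun x => x ^ (c-2) * shiftOp c S x) (Ioi 0) := by
  intro x hx
  have hxpos : (0:ℝ) < x := hx
  simp only [deltaOp, (hasDeriv_rpow_mul hS c x hx).deriv]
  rw [show c - 1 = (c-2)+1 by ring, rpow_succ' hxpos]
  field_simp

lemma bessel_step {S : ℝ → ℝ} (hS : ContDiffOn ℝ (⊤:ℕ∞) S (Ioi 0)) (b c : ℝ) :
    EqOn (besselOp b (fun t => t ^ c * S t))
      (fun x => x ^ (c-2) * shiftOp (b-1+c) (shiftOp c S) x) (Ioi 0) := by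
  intro x hx
  have hxpos : (0:ℝ) < x := hx
  have hUs : ContDiffOn ℝ (⊤:ℕ∞) (shiftOp c S) (Ioi 0) := shiftOp_smooth hS
  have hd1 : EqOn (deriv (fun t => t ^ c * S t)) (fun t => t ^ (c-1) * shiftOp c S t) (Ioi 0) :=
    fun t ht => (hasDeriv_rpow_mul hS c t ht).deriv
  have hd2 : deriv (deriv (fun t => t ^ c * S t)) x = x ^ (c-1-1) * shiftOp (c-1) (shiftOp c S) x := by
    rw [eqOn_deriv hd1 hx]
    exact (hasDeriv_rpow_mul hUs (c-1) x hx).deriv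
  simp only [besselOp, hd2, hd1 hx]
  rw [show c-1-1 = c-2 by ring, show c-1 = (c-2)+1 by ring, rpow_succ' hxpos]
  simp only [shiftOp]
  field_simp; ring

lemma shiftOp_comm {g : ℝ → ℝ} (hg : ContDiffOn ℝ (⊤:ℕ∞) g (Ioi 0)) (a b : ℝ) :
    EqOn (shiftOp a (shiftOp b g)) (shiftOp b (shiftOp a g)) (Ioi 0) := by
  have hdg : ContDiffOn ℝ (⊤:ℕ∞) (deriv g) (Ioi 0) :=
    hg.deriv_of_isOpen (m := (⊤:ℕ∞)) isOpen_Ioi (by simp)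
  have key : ∀ c : ℝ, ∀ t ∈ Ioi (0:ℝ),
      deriv (shiftOp c g) t = t * deriv (deriv g) t + (c+1) * deriv g t := by
    intro c t ht
    have h1 : HasDerivAt g (deriv g t) t := hasDerivAt_of_smooth hg ht
    have h2 : HasDerivAt (deriv g) (deriv (deriv g) t) t := hasDerivAt_of_smooth hdg ht
    have h3 : HasDerivAt (fun x => x * deriv g x + c * g x)
        (1 * deriv g t + t * deriv (deriv g) t + c * deriv g t) t :=
      ((hasDerivAt_id' t).mul h2).add (h1.const_mul c)
    have h4 := h3.deriv
    rw [show (fun x => x * deriv g x + c * g x) = shiftOp c g from rfl] at h4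
    rw [h4]; ring
  intro x hx
  show x * deriv (shiftOp b g) x + a * shiftOp b g x
      = x * deriv (shiftOp a g) x + b * shiftOp a g x
  rw [key a x hx, key b x hx]
  simp only [shiftOp]
  ring

lemma shifts_congr {f g : ℝ → ℝ} (h : EqOn f g (Ioi 0)) :
    ∀ l : List ℝ, EqOn (shifts l f) (shifts l g) (Ioi 0)
  | [] => h
  | c :: l => shiftOp_congr (shifts_congr h l)

lemma shifts_perm {g : ℝ → ℝ} (hg : ContDiffOn ℝ (⊤:ℕ∞) g (Ioi 0)) {l l' : List ℝ}
    (h : l.Perm l') : EqOn (shifts l g) (shifts l' g) (Ioi 0) := by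
  induction h with
  | nil => exact fun x _ => rfl
  | cons a _ ih => exact shiftOp_congr ih
  | swap a b l => exact shiftOp_comm (shifts_smooth hg l) b a
  | trans _ _ ih1 ih2 => exact fun x hx => (ih1 hx).trans (ih2 hx)

def canonL (n : ℕ) (c : ℝ) : List ℝ := (List.range n).map (fun k : ℕ => c - 2 * (k : ℝ))

def listP : ℕ → ℝ → List ℝ
  | 0, _ => []
  | n+1, c => (c - 2*n) :: listP n c

def listR (b : ℝ) : ℕ → List ℝ
  | 0 => []
  | k+1 => (b - 1 + (0 - 2*(k:ℝ))) :: (0 - 2*(k:ℝ)) :: listR b k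

lemma canonL_succ (n : ℕ) (c : ℝ) : canonL (n+1) c = canonL n c ++ [c - 2*n] := by
  simp [canonL, List.range_succ]

lemma listP_eq (n : ℕ) (c : ℝ) : listP n c = (canonL n c).reverse := by
  induction n with
  | zero => simp [listP, canonL]
  | succ n ih => rw [canonL_succ, List.reverse_append]; simp [listP, ih]

lemma canonL_add (m n : ℕ) (c : ℝ) : canonL (m+n) c = canonL m c ++ canonL n (c - 2*m) := by
  unfold canonL
  rw [List.range_add, List.map_append, List.map_map]
  congr 1
  apply List.map_congr_left
  intro k _
  simp only [Function.comp_apply]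
  push_cast; ring

lemma cons_cons_perm (a b : ℝ) (L1 L2 : List ℝ) :
    (a :: b :: (L1 ++ L2)).Perm ((L1 ++ [a]) ++ (L2 ++ [b])) := by
  apply List.Perm.symm
  have e1 : (L1 ++ [a]) ++ (L2 ++ [b]) = L1 ++ (a :: (L2 ++ [b])) := by simp
  have p1 : (L1 ++ (a :: (L2 ++ [b]))).Perm (a :: (L1 ++ (L2 ++ [b]))) := List.perm_middle
  have p2 : (L1 ++ (L2 ++ [b])).Perm (b :: (L1 ++ L2)) := by
    rw [← List.append_assoc]; exact List.perm_append_singleton _ _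
  rw [e1]
  exact p1.trans (p2.cons a)

lemma listR_perm (b : ℝ) : ∀ k : ℕ, (listR b k).Perm (canonL k (b-1) ++ canonL k 0)
  | 0 => by simp [listR, canonL]
  | k+1 => by
    have ih := listR_perm b k
    rw [canonL_succ, canonL_succ]
    rw [show listR b (k+1) = (b - 1 + (0 - 2*(k:ℝ))) :: (0 - 2*(k:ℝ)) :: listR b k from rfl]
    rw [show b - 1 + (0 - 2*(k:ℝ)) = (b-1) - 2*(k:ℝ) by ring]
    exact (((ih.cons _).cons _)).trans (cons_cons_perm _ _ _ _)

lemma deltaOp_congr {f g : ℝ → ℝ} (h : EqOn f g (Ioi 0)) :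
    EqOn (deltaOp f) (deltaOp g) (Ioi 0) :=
  fun x hx => by simp only [deltaOp]; rw [eqOn_deriv h hx]

lemma besselOp_congr {b : ℝ} {f g : ℝ → ℝ} (h : EqOn f g (Ioi 0)) :
    EqOn (besselOp b f) (besselOp b g) (Ioi 0) :=
  fun x hx => by simp only [besselOp]; rw [eqOn_deriv h hx, eqOn_deriv (eqOn_deriv h) hx]

lemma deltaOp_iter_congr {f g : ℝ → ℝ} (h : EqOn f g (Ioi 0)) :
    ∀ n, EqOn (deltaOp^[n] f) (deltaOp^[n] g) (Ioi 0)
  | 0 => h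
  | n+1 => by
    rw [Function.iterate_succ_apply, Function.iterate_succ_apply]
    exact deltaOp_iter_congr (deltaOp_congr h) n

lemma delta_iter {y : ℝ → ℝ} (hy : ContDiffOn ℝ (⊤:ℕ∞) y (Ioi 0)) (c : ℝ) :
    ∀ n : ℕ, EqOn (deltaOp^[n] (fun t => t ^ c * y t))
      (fun x => x ^ (c - 2*(n:ℝ)) * shifts (listP n c) y x) (Ioi 0)
  | 0 => fun x hx => by simp [listP, shifts]
  | n+1 => by
    have ih := delta_iter hy c n
    intro x hx
    rw [Function.iterate_succ_apply']
    rw [deltaOp_congr ih hx]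
    rw [delta_step (shifts_smooth hy (listP n c)) (c - 2*(n:ℝ)) hx]
    beta_reduce
    push_cast
    rw [show c - 2*((n:ℝ)+1) = c - 2*(n:ℝ) - 2 by ring]
    rfl

lemma bessel_iter {y : ℝ → ℝ} (hy : ContDiffOn ℝ (⊤:ℕ∞) y (Ioi 0)) (b : ℝ) :
    ∀ k : ℕ, EqOn ((besselOp b)^[k] y)
      (fun x => x ^ ((0:ℝ) - 2*(k:ℝ)) * shifts (listR b k) y x) (Ioi 0)
  | 0 => fun x hx => by simp [listR, shifts, Real.rpow_zero]
  | k+1 => by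
    have ih := bessel_iter hy b k
    intro x hx
    rw [Function.iterate_succ_apply']
    rw [besselOp_congr ih hx]
    rw [bessel_step (shifts_smooth hy (listR b k)) b ((0:ℝ) - 2*(k:ℝ)) hx]
    beta_reduce
    push_cast
    rw [show (0:ℝ) - 2*((k:ℝ)+1) = (0:ℝ) - 2*(k:ℝ) - 2 by ring]
    rfl

theorem delta_pow_eq_bessel_pow (β : ℕ) (y : ℝ → ℝ) (hy : ContDiff ℝ (⊤ : ℕ∞) y)
    (x : ℝ) (hx : 0 < x) :
    (deltaOp^[2 * β] (fun t => t ^ (2 * β) * y t)) x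
      = ((besselOp (2 * (β : ℝ) + 1))^[β] y) x := by
  have hy' : ContDiffOn ℝ (⊤:ℕ∞) y (Ioi 0) := (hy.of_le (by simp)).contDiffOn
  have hx' : x ∈ Ioi (0:ℝ) := hx
  have e1 : EqOn (fun t:ℝ => t ^ (2*β) * y t) (fun t:ℝ => t ^ ((2*β:ℕ):ℝ) * y t) (Ioi 0) :=
    fun t _ => by simp only [Real.rpow_natCast]
  have hperm : (listP (2*β) ((2*β:ℕ):ℝ)).Perm (listR (2*(β:ℝ)+1) β) := by
    have h1 : (listP (2*β) ((2*β:ℕ):ℝ)).Perm (canonL (2*β) ((2*β:ℕ):ℝ)) := by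
      rw [listP_eq]; exact List.reverse_perm _
    have h2 : canonL (2*β) ((2*β:ℕ):ℝ) = canonL β ((2*(β:ℝ)+1)-1) ++ canonL β 0 := by
      rw [two_mul β, canonL_add]
      congr 2
      · push_cast; ring
      · push_cast; ring
    exact (h1.trans (h2 ▸ List.Perm.refl _)).trans (listR_perm _ β).symm
  rw [deltaOp_iter_congr e1 (2*β) hx', delta_iter hy' ((2*β:ℕ):ℝ) (2*β) hx',
      bessel_iter hy' (2*(β:ℝ)+1) β hx']
  beta_reduce
  rw [shifts_perm hy' hperm hx']
  congr 1
  push_cast; ring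
end
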